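/- In the algebra ℂ_w[x,y] (with relations y x = w(1,1) x y, x·w(s,t) = w(s+1,t)·x, y·w(s,t) = w(s,t+1)·y), define the noncommutative weight-dependent Fibonacci polynomials by F_0 = 1, F_1 = y, and F_{n+2} = F_n·x + F_{n+1}·y. Then for all n ≥ 0, F_n = ∑_{k=0}^{⌊n/2⌋} [n-k choose k]_w · x^k · y^{n-2k}, where [m choose k]_w are the weight-dependent binomial coefficients defined by [0 choose 0]_w = 1, [m choose k]_w = 0 for k < 0 or k > m, and [m+1 choose k]_w = [m choose k]_w + [m choose k-1]_w·W(k, m+1-k) with W(s,t) = ∏_{j=1}^t w(s,j). -/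
import Mathlib

/-- The big (column) weight W(s,t) = w(s,1)⋯w(s,t). -/
def bigW {R : Type*} [Ring R] (w : ℕ → ℕ → R) (s t : ℕ) : R :=
  ((List.range t).map (fun j => w s (j + 1))).prod

/-- Weight-dependent binomial coefficients:
[0,0] = 1, [n,k] = 0 for k > n, and
[n+1,k] = [n,k] + [n,k-1]·W(k, n+1-k). -/
def wBin {R : Type*} [Ring R] (w : ℕ → ℕ → R) : ℕ → ℕ → R
  | 0, 0 => 1
  | 0, _ + 1 => 0
  | n + 1, 0 => wBin w n 0
  | n + 1, k + 1 => wBin w n (k + 1) + wBin w n k * bigW w (k + 1) (n - k)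

section
variable {R : Type*} [Ring R] (w : ℕ → ℕ → R)

lemma bigW_succ (s t : ℕ) : bigW w s (t+1) = bigW w s t * w s (t+1) := by
  simp [bigW, List.range_succ]

lemma wBin_succ_succ (n k : ℕ) :
    wBin w (n+1) (k+1) = wBin w n (k+1) + wBin w n k * bigW w (k+1) (n-k) := rfl

lemma wBin_zero_right (n : ℕ) : wBin w n 0 = 1 := by
  induction n with
  | zero => rfl
  | succ n ih => rw [show wBin w (n+1) 0 = wBin w n 0 from rfl, ih]

lemma wBin_eq_zero : ∀ n k, n < k → wBin w n k = 0 := by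
  intro n
  induction n with
  | zero => intro k h; match k with
    | k + 1 => rfl
  | succ n ih => intro k h; match k with
    | k + 1 =>
      rw [wBin_succ_succ, ih (k+1) (by omega), ih k (by omega), zero_mul, add_zero]

variable (x y : R)
variable (hww : ∀ s t s' t', w s t * w s' t' = w s' t' * w s t)
variable (hyx : y * x = w 1 1 * (x * y))
variable (hxw : ∀ s t, 1 ≤ s → 1 ≤ t → x * w s t = w (s + 1) t * x)
variable (hyw : ∀ s t, 1 ≤ s → 1 ≤ t → y * w s t = w s (t + 1) * y)

include hww in
lemma bigW_comm_w (s t s' t' : ℕ) : bigW w s t * w s' t' = w s' t' * bigW w s t := by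
  induction t with
  | zero => simp [bigW]
  | succ t ih =>
    rw [bigW_succ, mul_assoc, hww, ← mul_assoc, ih, mul_assoc]

include hyw in
lemma y_pow_w (s : ℕ) (hs : 1 ≤ s) :
    ∀ m t, 1 ≤ t → y ^ m * w s t = w s (t + m) * y ^ m := by
  intro m
  induction m with
  | zero => simp
  | succ m ih =>
    intro t ht
    rw [pow_succ, mul_assoc, hyw s t hs ht, ← mul_assoc, ih (t+1) (by omega),
      mul_assoc, ← pow_succ, show t + 1 + m = t + (m + 1) from by omega]

include hxw in
lemma x_pow_w (t : ℕ) (ht : 1 ≤ t) :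
    ∀ k s, 1 ≤ s → x ^ k * w s t = w (s + k) t * x ^ k := by
  intro k
  induction k with
  | zero => simp
  | succ k ih =>
    intro s hs
    rw [pow_succ, mul_assoc, hxw s t hs ht, ← mul_assoc, ih (s+1) (by omega),
      mul_assoc, ← pow_succ, show s + 1 + k = s + (k + 1) from by omega]

include hxw in
lemma x_pow_bigW (s m : ℕ) (hs : 1 ≤ s) (k : ℕ) :
    x ^ k * bigW w s m = bigW w (s + k) m * x ^ k := by
  induction m with
  | zero => simp [bigW]
  | succ m ih =>
    rw [bigW_succ, ← mul_assoc, ih, mul_assoc,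
      x_pow_w w x hxw (m+1) (by omega) k s hs, ← mul_assoc, bigW_succ]

include hww hyx hyw in
lemma y_pow_x : ∀ m, y ^ m * x = bigW w 1 m * (x * y ^ m) := by
  intro m
  induction m with
  | zero => simp [bigW]
  | succ m ih =>
    calc y ^ (m+1) * x = y ^ m * (y * x) := by rw [pow_succ, mul_assoc]
    _ = (y ^ m * w 1 1) * (x * y) := by rw [hyx, mul_assoc]
    _ = w 1 (1 + m) * ((y ^ m * x) * y) := by
        rw [y_pow_w w y hyw 1 le_rfl m 1 le_rfl, mul_assoc, mul_assoc (y ^ m) x y]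
    _ = (w 1 (m + 1) * bigW w 1 m) * (x * y ^ (m+1)) := by
        rw [ih, show (1 + m) = m + 1 from by omega, mul_assoc, mul_assoc, mul_assoc,
          ← pow_succ]
    _ = bigW w 1 (m+1) * (x * y ^ (m+1)) := by
        rw [← bigW_comm_w w hww 1 m 1 (m+1), ← bigW_succ]

include hww hyx hxw hyw in
lemma key_comm (k m : ℕ) :
    (x ^ k * y ^ m) * x = bigW w (k+1) m * (x ^ (k+1) * y ^ m) := by
  rw [mul_assoc, y_pow_x w x y hww hyx hyw m, ← mul_assoc,
    x_pow_bigW w x hxw 1 m le_rfl k, show (1 + k : ℕ) = k + 1 from by omega,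
    mul_assoc, ← mul_assoc (x ^ k), ← pow_succ]

include hww hyx hxw hyw in
lemma fib_step (n : ℕ) :
    (∑ k ∈ Finset.range (n/2+1+1), wBin w (n+2-k) k * (x^k * y^(n+2-2*k)))
    = (∑ k ∈ Finset.range (n/2+1), wBin w (n-k) k * (x^k * y^(n-2*k))) * x
    + (∑ k ∈ Finset.range ((n+1)/2+1), wBin w (n+1-k) k * (x^k * y^(n+1-2*k))) * y := by
  have hL : (∑ k ∈ Finset.range (n/2+1+1), wBin w (n+2-k) k * (x^k * y^(n+2-2*k)))
      = (∑ k ∈ Finset.range (n/2+1),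
          (wBin w (n-k) (k+1) * (x^(k+1) * y^(n-2*k))
           + (wBin w (n-k) k * (x^k * y^(n-2*k))) * x))
        + wBin w (n+1) 0 * (x^0 * y^(n+2)) := by
    rw [Finset.sum_range_succ']
    congr 1
    apply Finset.sum_congr rfl
    intro k hk
    have hk' : k < n/2+1 := Finset.mem_range.mp hk
    have e1 : n + 2 - (k+1) = (n-k) + 1 := by omega
    have e2 : n + 2 - 2*(k+1) = n - 2*k := by omega
    have e3 : n - k - k = n - 2*k := by omega
    rw [e1, e2, wBin_succ_succ, e3, add_mul]
    congr 1
    rw [mul_assoc, ← key_comm w x y hww hyx hxw hyw k (n - 2*k), ← mul_assoc]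
  have hR : (∑ k ∈ Finset.range ((n+1)/2+1), wBin w (n+1-k) k * (x^k * y^(n+1-2*k))) * y
      = (∑ k ∈ Finset.range (n/2+1), wBin w (n-k) (k+1) * (x^(k+1) * y^(n-2*k)))
        + wBin w (n+1) 0 * (x^0 * y^(n+2)) := by
    rw [Finset.sum_mul]
    have h1 : ∀ k ∈ Finset.range ((n+1)/2+1),
        (wBin w (n+1-k) k * (x^k * y^(n+1-2*k))) * y
          = wBin w (n+1-k) k * (x^k * y^(n+2-2*k)) := by
      intro k hk
      have h2 : 2*k ≤ n+1 := by
        have := Finset.mem_range.mp hk; omega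
      rw [mul_assoc, mul_assoc, ← pow_succ, show n+1-2*k+1 = n+2-2*k from by omega]
    rw [Finset.sum_congr rfl h1]
    have hsub : Finset.range ((n+1)/2+1) ⊆ Finset.range (n/2+1+1) :=
      Finset.range_subset_range.mpr (by omega)
    rw [Finset.sum_subset hsub (fun k hk hk' => by
      have hm1 : k < n/2+1+1 := Finset.mem_range.mp hk
      have hm2 : ¬ k < (n+1)/2+1 := fun h => hk' (Finset.mem_range.mpr h)
      rw [wBin_eq_zero w (n+1-k) k (by omega), zero_mul])]
    rw [Finset.sum_range_succ']
    congr 1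
    apply Finset.sum_congr rfl
    intro k hk
    have hk' : k < n/2+1 := Finset.mem_range.mp hk
    rw [show n+1-(k+1) = n-k from by omega, show n+2-2*(k+1) = n-2*k from by omega]
  rw [hL, hR, Finset.sum_add_distrib, Finset.sum_mul]
  abel

include hww hyx hxw hyw in
theorem weight_fibonacci_normal_form' 
    (F : ℕ → R) (h0 : F 0 = 1) (h1 : F 1 = y)
    (hrec : ∀ n : ℕ, F (n + 2) = F n * x + F (n + 1) * y) :
    ∀ n : ℕ, F n = ∑ k ∈ Finset.range (n / 2 + 1),
      wBin w (n - k) k * (x ^ k * y ^ (n - 2 * k)) := by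
  have key : ∀ n : ℕ, (F n = ∑ k ∈ Finset.range (n / 2 + 1),
        wBin w (n - k) k * (x ^ k * y ^ (n - 2 * k)))
      ∧ (F (n+1) = ∑ k ∈ Finset.range ((n+1) / 2 + 1),
        wBin w (n+1 - k) k * (x ^ k * y ^ (n+1 - 2 * k))) := by
    intro n
    induction n with
    | zero =>
      constructor
      · rw [h0]; simp [wBin]
      · rw [h1]; norm_num; rw [wBin_zero_right]; simp
    | succ n ih =>
      refine ⟨ih.2, ?_⟩
      rw [show n + 1 + 1 = n + 2 from rfl, hrec n, ih.1, ih.2,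
        show (n+2)/2 + 1 = n/2 + 1 + 1 from by omega,
        fib_step w x y hww hyx hxw hyw n]
  exact fun n => (key n).1

end

/-- Normalized form of the noncommutative weight-dependent Fibonacci
polynomials: F_n = ∑_{k=0}^{⌊n/2⌋} [n-k,k]_w x^k y^{n-2k}. -/
theorem weight_fibonacci_normal_form {R : Type*} [Ring R] [Algebra ℂ R]
    (x y : R) (w : ℕ → ℕ → R)
    (hww : ∀ s t s' t', w s t * w s' t' = w s' t' * w s t)
    (hyx : y * x = w 1 1 * (x * y))
    (hxw : ∀ s t, 1 ≤ s → 1 ≤ t → x * w s t = w (s + 1) t * x)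
    (hyw : ∀ s t, 1 ≤ s → 1 ≤ t → y * w s t = w s (t + 1) * y)
    (F : ℕ → R) (h0 : F 0 = 1) (h1 : F 1 = y)
    (hrec : ∀ n : ℕ, F (n + 2) = F n * x + F (n + 1) * y) :
    ∀ n : ℕ, F n = ∑ k ∈ Finset.range (n / 2 + 1),
      wBin w (n - k) k * (x ^ k * y ^ (n - 2 * k)) :=
  weight_fibonacci_normal_form' w x y hww hyx hxw hyw F h0 h1 hrec
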